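/- arXiv:math/0207310 — 7 statements merged into one kernel-verified Lean document; each statement's English description precedes it below -/
import Mathlib

section
/- Let 𝔽 be a finite field of characteristic p with |𝔽| > 2, let r ≥ 1, and let W = 𝔽^r be the natural r-dimensional representation of GL_r(𝔽) over 𝔽 (the action by matrix-vector multiplication). Then H¹(GL_r(𝔽), W) = 0. -/
/-!
A central element `z` acting by a scalar `c` with `c - 1` invertible kills `H¹`: for a 1-cocycle
`f`, expanding `f (z g) = f (g z)` gives `(c - 1) f(g) = g · f(z) - f(z)`, so `f` is the
coboundary of `(c - 1)⁻¹ f(z)`. For `GL_r(𝔽)` take `z` the scalar matrix `λ`, where `λ ≠ 0, 1`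
exists because `|𝔽| > 2`.
-/

open groupCohomology

universe u

/-- The natural representation of `GL n 𝔽` on `Fin n → 𝔽` by matrix-vector multiplication. -/
noncomputable def glRep (𝔽 : Type u) [Field 𝔽] (n : ℕ) :
    Representation 𝔽 (GL (Fin n) 𝔽) (Fin n → 𝔽) :=
  (Units.coeHom ((Fin n → 𝔽) →ₗ[𝔽] (Fin n → 𝔽))).comp
    (Matrix.GeneralLinearGroup.toLin (n := Fin n) (R := 𝔽)).toMonoidHom

theorem Fintype.exists_ne_ne_of_two_lt_card {α : Type*} [Fintype α]
    (h : 2 < Fintype.card α) (a b : α) : ∃ c : α, c ≠ a ∧ c ≠ b := by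
  classical
  have hab : ({a, b} : Finset α).card < (Finset.univ : Finset α).card :=
    Finset.card_le_two.trans_lt h
  obtain ⟨c, -, hc⟩ := Finset.exists_mem_notMem_of_card_lt_card hab
  simp only [Finset.mem_insert, Finset.mem_singleton, not_or] at hc
  exact ⟨c, hc⟩

namespace groupCohomology

variable {k G : Type u} [CommRing k] [Group G] {A : Rep k G}

theorem sub_one_smul_cocycles₁_apply {z : G} {c : k} (hρ : ∀ v, A.ρ z v = c • v)
    (f : cocycles₁ A) {g : G} (hzg : z * g = g * z) :
    (c - 1) • f g = A.ρ g (f z) - f z := by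
  have hf := (mem_cocycles₁_iff (f : G → A)).1 f.2
  have hcomm : c • f g + f z = A.ρ g (f z) + f g := by
    rw [← hρ, ← hf, ← hf, hzg]
  rw [sub_smul, one_smul]
  linear_combination (norm := module) hcomm

theorem subsingleton_H1_of_central_scalar {z : G} (hz : z ∈ Subgroup.center G) {c : k}
    (hc : IsUnit (c - 1)) (hρ : ∀ v, A.ρ z v = c • v) : Subsingleton (H1 A) := by
  refine subsingleton_of_forall_eq 0 fun x => ?_
  induction x using H1_induction_on with | h f => ?_
  rw [H1π_eq_zero_iff]
  refine ⟨(↑hc.unit⁻¹ : k) • f z, funext fun g => ?_⟩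
  have hzg : z * g = g * z := (Subgroup.mem_center_iff.1 hz g).symm
  rw [d₀₁_hom_apply, map_smul, ← smul_sub, ← sub_one_smul_cocycles₁_apply hρ f hzg,
    smul_smul, hc.val_inv_mul, one_smul]

end groupCohomology

theorem glRep_scalar {𝔽 : Type u} [Field 𝔽] {n : ℕ} (u : 𝔽ˣ) (v : Fin n → 𝔽) :
    glRep 𝔽 n (Matrix.GeneralLinearGroup.scalar (Fin n) u) v = (u : 𝔽) • v := by
  ext i
  simp [glRep]

theorem h1_GL_natural_rep_eq_zero_general (𝔽 : Type u) [Field 𝔽] [Fintype 𝔽]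
    (hcard : 2 < Fintype.card 𝔽) (r : ℕ) :
    Subsingleton (groupCohomology.H1 (Rep.of (glRep 𝔽 r))) := by
  obtain ⟨l, hl0, hl1⟩ := Fintype.exists_ne_ne_of_two_lt_card hcard 0 1
  have hcentral : Matrix.GeneralLinearGroup.scalar (Fin r) (Units.mk0 l hl0) ∈
      Subgroup.center (GL (Fin r) 𝔽) :=
    Subgroup.mem_center_iff.2 fun g => (Matrix.GeneralLinearGroup.scalar_commute _ g).symm
  exact subsingleton_H1_of_central_scalar hcentral (sub_ne_zero.2 hl1).isUnit (glRep_scalar _)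

/-- If `𝔽` is a finite field of characteristic `p` with more than two
elements and `W = 𝔽^r` (`r ≥ 1`) is the natural representation of `GL_r(𝔽)`, then
`H¹(GL_r(𝔽), W) = 0`. -/
theorem h1_GL_natural_rep_eq_zero (p : ℕ) [Fact p.Prime] (𝔽 : Type u) [Field 𝔽] [Fintype 𝔽]
    [CharP 𝔽 p] (hcard : 2 < Fintype.card 𝔽) (r : ℕ) (hr : 1 ≤ r) :
    Subsingleton (groupCohomology.H1 (Rep.of (glRep 𝔽 r))) :=
  h1_GL_natural_rep_eq_zero_general 𝔽 hcard r
end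

section
/- Let 𝔽 be a finite field of characteristic p with p ≠ 2, let r ≥ 1, and let W = 𝔽^r be the natural r-dimensional representation of SL_r(𝔽) over 𝔽 (the action by matrix-vector multiplication). Then H¹(SL_r(𝔽), W) = 0. -/
/-!
Subtracting the average of a cocycle `f` over the diagonal sign matrices of determinant one
(a `2`-group, so its order is invertible) makes `f` vanish on them. If `g` commutes with a sign
matrix `s`, then `s • f g = f g`, so `f g` vanishes at every coordinate negated by `s`.
A transvection `t_ij(c)` commutes with the sign matrix negating `i` and `j`, which kills the
coordinates `i` and `j` of `f (t_ij(c))`; any other coordinate `l` is killed by evaluating `f`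
at coordinate `i` on both sides of `t_ij(a) t_jl(b) = t_il(ab) t_jl(b) t_ij(a)`. Diagonal
matrices commute with all sign matrices, and `SL` is generated by transvections and diagonal
matrices, so `f = 0`.
-/

open groupCohomology

universe u

/-- The natural representation of `SL n 𝔽` on `Fin n → 𝔽` by matrix-vector multiplication. -/
noncomputable def slRep (𝔽 : Type u) [Field 𝔽] (n : ℕ) :
    Representation 𝔽 (Matrix.SpecialLinearGroup (Fin n) 𝔽) (Fin n → 𝔽) :=
  MonoidHom.comp (glRep 𝔽 n) Matrix.SpecialLinearGroup.toGL

open Matrix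

namespace groupCohomology

variable {G V : Type*} [Monoid G] [AddCommGroup V] [DistribMulAction G V] {f : G → V}

theorem IsCocycle₁.sub_coboundary (hf : IsCocycle₁ f) (x : V) :
    IsCocycle₁ fun g => f g - (g • x - x) := by
  intro g h
  simp only [hf g h, mul_smul, smul_sub]
  abel

theorem IsCocycle₁.smul_apply_of_commute (hf : IsCocycle₁ f) {s g : G} (hs : f s = 0)
    (hsg : Commute s g) : s • f g = f g := by
  have hsg' := hf s g
  rw [hsg.eq, hf g s, hs, smul_zero, zero_add, add_zero] at hsg'
  exact hsg'.symm

theorem IsCocycle₁.exists_smul_sub_eq_comp {K F : Type*} [Group K] [Finite K] [DivisionRing F]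
    [Module F V] [SMulCommClass G F V] (hf : IsCocycle₁ f) (φ : K →* G)
    (hK : (Nat.card K : F) ≠ 0) : ∃ x : V, ∀ k, φ k • x - x = f (φ k) := by
  have := Fintype.ofFinite K
  rw [Nat.card_eq_fintype_card] at hK
  set S := ∑ k, f (φ k)
  have hS : ∀ k, φ k • S - S = -((Fintype.card K : F) • f (φ k)) := by
    intro k
    have := Equiv.sum_comp (Equiv.mulLeft k) fun k' => f (φ k')
    simp only [Equiv.coe_mulLeft, map_mul, hf (φ k), Finset.sum_add_distrib, Finset.sum_const,
      Finset.card_univ, ← Finset.smul_sum] at this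
    rw [Nat.cast_smul_eq_nsmul, eq_neg_iff_add_eq_zero, sub_add_eq_add_sub, sub_eq_zero]
    exact this
  refine ⟨-((Fintype.card K : F)⁻¹ • S), fun k => ?_⟩
  rw [smul_neg, smul_comm, ← neg_sub', ← smul_sub, hS, smul_neg, neg_neg, smul_smul,
    inv_mul_cancel₀ hK, one_smul]

end groupCohomology

namespace Matrix.SpecialLinearGroup

variable {ι F : Type*} [Fintype ι] [DecidableEq ι] [Field F]

theorem transvection_smul_apply_self {i j : ι} (hij : i ≠ j) (c : F) (v : ι → F) :
    (transvection hij c • v) i = v i + c * v j := by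
  simp [SpecialLinearGroup.smul_def, transvection_coe, add_mulVec, single_mulVec]

theorem transvection_smul_apply_of_ne {i j k : ι} (hij : i ≠ j) (c : F) (v : ι → F) (hk : k ≠ i) :
    (transvection hij c • v) k = v k := by
  simp [SpecialLinearGroup.smul_def, transvection_coe, add_mulVec, single_mulVec, hk]

theorem transvection_mul_transvection {i j l : ι} (hij : i ≠ j) (hjl : j ≠ l) (hil : i ≠ l)
    (a b : F) :
    transvection hij a * transvection hjl b =
      transvection hil (a * b) * (transvection hjl b * transvection hij a) := by
  refine Subtype.ext ?_
  simp only [coe_mul, transvection_coe, mul_add, add_mul, mul_one, one_mul,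
    single_mul_single_same, single_mul_single_of_ne _ _ _ _ hjl.symm,
    single_mul_single_of_ne _ _ _ _ hil.symm, add_zero]
  abel

variable (ι) in
def signProd : (ι → ℤˣ) →* ℤˣ where
  toFun ε := ∏ i, ε i
  map_one' := Finset.prod_const_one
  map_mul' _ _ := Finset.prod_mul_distrib

theorem natCast_card_signProd_ker_ne_zero (h2 : (2 : F) ≠ 0) :
    (Nat.card (signProd ι).ker : F) ≠ 0 := by
  have hdvd : Nat.card (signProd ι).ker ∣ 2 ^ Nat.card ι := by
    simpa [Nat.card_fun, Nat.card_eq_fintype_card, Fintype.card_units_int] using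
      Subgroup.card_subgroup_dvd_card (signProd ι).ker
  obtain ⟨m, -, hm⟩ := (Nat.dvd_prime_pow Nat.prime_two).1 hdvd
  rw [hm, Nat.cast_pow, Nat.cast_ofNat]
  exact pow_ne_zero m h2

variable (F) in
def signDiagonal : (signProd ι).ker →* SpecialLinearGroup ι F where
  toFun ε := ⟨diagonal fun i => ((ε.1 i : ℤ) : F), by
    have hε : ∏ i, ε.1 i = 1 := ε.2
    rw [det_diagonal, ← Int.cast_prod, ← Units.coe_prod, hε, Units.val_one, Int.cast_one]⟩
  map_one' := Subtype.ext <| by simp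
  map_mul' _ _ := Subtype.ext <| by
    change diagonal _ = diagonal _ * diagonal _
    simp [diagonal_mul_diagonal]

@[simp]
theorem coe_signDiagonal (ε : (signProd ι).ker) :
    (signDiagonal F ε : Matrix ι ι F) = diagonal fun i => ((ε.1 i : ℤ) : F) :=
  rfl

theorem signDiagonal_smul_apply (ε : (signProd ι).ker) (v : ι → F) (k : ι) :
    (signDiagonal F ε • v) k = ((ε.1 k : ℤ) : F) * v k := by
  simp [SpecialLinearGroup.smul_def, mulVec_diagonal]

theorem exists_signProd_ker_apply_eq_neg_one {k l : ι} (hkl : k ≠ l) :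
    ∃ ε : (signProd ι).ker, ε.1 k = -1 ∧ ε.1 l = -1 := by
  refine ⟨⟨Pi.mulSingle k (-1) * Pi.mulSingle l (-1), ?_⟩, by simp [hkl, hkl.symm]⟩
  simp [signProd, Finset.prod_mul_distrib]

theorem commute_signDiagonal_of_coe_eq_diagonal (ε : (signProd ι).ker)
    {g : SpecialLinearGroup ι F} {d : ι → F} (hg : (g : Matrix ι ι F) = diagonal d) :
    Commute (signDiagonal F ε) g := by
  refine Subtype.ext ?_
  simp [hg, diagonal_mul_diagonal, mul_comm]

theorem commute_signDiagonal_transvection (ε : (signProd ι).ker) {i j : ι} (hij : i ≠ j)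
    (hε : ε.1 i = ε.1 j) (c : F) :
    Commute (signDiagonal F ε) (transvection hij c) := by
  refine Subtype.ext ?_
  simp only [coe_mul, coe_signDiagonal, transvection_coe, mul_add, add_mul, mul_one, one_mul,
    add_right_inj]
  ext a b
  simp only [diagonal_mul, mul_diagonal, single_apply]
  split_ifs with h
  · rw [← h.1, ← h.2, hε, mul_comm]
  · simp

end Matrix.SpecialLinearGroup

namespace groupCohomology.IsCocycle₁

open Matrix.SpecialLinearGroup

variable {ι F : Type*} [Fintype ι] [DecidableEq ι] [Field F]
  {f : SpecialLinearGroup ι F → ι → F} (h2 : (2 : F) ≠ 0) (hf : IsCocycle₁ f)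

section SignDiagonal

variable (hsign : ∀ ε, f (signDiagonal F ε) = 0)
include h2 hf hsign

theorem apply_eq_zero_of_commute_signDiagonal {ε : (signProd ι).ker}
    {g : SpecialLinearGroup ι F} (hg : Commute (signDiagonal F ε) g) {k : ι} (hk : ε.1 k = -1) :
    f g k = 0 := by
  have hfix := congrFun (hf.smul_apply_of_commute (hsign ε) hg) k
  rw [signDiagonal_smul_apply, hk, Units.val_neg, Units.val_one, Int.cast_neg, Int.cast_one,
    neg_one_mul, neg_eq_iff_add_eq_zero, ← two_mul] at hfix
  exact (mul_eq_zero.1 hfix).resolve_left h2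

theorem apply_transvection_fst {i j : ι} (hij : i ≠ j) (c : F) : f (transvection hij c) i = 0 := by
  obtain ⟨ε, hεi, hεj⟩ := exists_signProd_ker_apply_eq_neg_one hij
  exact apply_eq_zero_of_commute_signDiagonal h2 hf hsign
    (commute_signDiagonal_transvection ε hij (hεi.trans hεj.symm) c) hεi

theorem apply_transvection_snd {i j : ι} (hij : i ≠ j) (c : F) : f (transvection hij c) j = 0 := by
  obtain ⟨ε, hεi, hεj⟩ := exists_signProd_ker_apply_eq_neg_one hij
  exact apply_eq_zero_of_commute_signDiagonal h2 hf hsign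
    (commute_signDiagonal_transvection ε hij (hεi.trans hεj.symm) c) hεj

theorem apply_transvection_of_ne {i j l : ι} (hij : i ≠ j) (hil : i ≠ l) (hjl : j ≠ l) (c : F) :
    f (transvection hij c) l = 0 := by
  rcases eq_or_ne c 0 with rfl | hc
  · simp [map_one_of_isCocycle₁ hf]
  have e := congrFun (congrArg f (transvection_mul_transvection hij hjl hil c 1)) i
  simp only [hf _ _, Pi.add_apply, transvection_smul_apply_self,
    transvection_smul_apply_of_ne _ _ _ hij, transvection_smul_apply_of_ne _ _ _ hjl.symm,
    apply_transvection_fst h2 hf hsign, apply_transvection_snd h2 hf hsign] at e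
  have hcl : c * f (transvection hij c) l = 0 := by linear_combination -e
  exact (mul_eq_zero.1 hcl).resolve_left hc

theorem apply_transvection {i j : ι} (hij : i ≠ j) (c : F) : f (transvection hij c) = 0 := by
  funext l
  rcases eq_or_ne i l with rfl | hil
  · exact apply_transvection_fst h2 hf hsign hij c
  rcases eq_or_ne j l with rfl | hjl
  · exact apply_transvection_snd h2 hf hsign hij c
  exact apply_transvection_of_ne h2 hf hsign hij hil hjl c

theorem apply_diag2n [Nontrivial ι] {i j : ι} (hij : i ≠ j) {c : F} (hc : c ≠ 0) :
    f (diag2n hij c hc) = 0 := by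
  funext k
  obtain ⟨l, hkl⟩ := exists_ne k
  obtain ⟨ε, hεk, -⟩ := exists_signProd_ker_apply_eq_neg_one hkl.symm
  exact apply_eq_zero_of_commute_signDiagonal h2 hf hsign
    (commute_signDiagonal_of_coe_eq_diagonal ε (diag2n_coe hij c hc)) hεk

theorem eq_zero_of_forall_signDiagonal : f = 0 := by
  funext g
  rcases subsingleton_or_nontrivial ι with hι | hι
  · simp [Subsingleton.elim g 1, map_one_of_isCocycle₁ hf]
  refine diagonal_transvection_induction' (fun g => f g = 0) g
    (fun _ _ hij _ hc => apply_diag2n h2 hf hsign hij hc)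
    (fun _ _ hij c => apply_transvection h2 hf hsign hij c) fun A B hA hB => ?_
  rw [hf, hA, hB, smul_zero, add_zero]

end SignDiagonal

include h2 hf in
theorem isCoboundary₁ : IsCoboundary₁ f := by
  obtain ⟨x, hx⟩ := hf.exists_smul_sub_eq_comp (signDiagonal F)
    (natCast_card_signProd_ker_ne_zero h2)
  have hf' := hf.sub_coboundary x
  have := eq_zero_of_forall_signDiagonal h2 hf' fun ε => by simp [hx]
  exact ⟨x, fun g => (sub_eq_zero.1 (congrFun this g)).symm⟩

end groupCohomology.IsCocycle₁

theorem h1_SL_natural_rep_eq_zero_general (p : ℕ) (𝔽 : Type u) [Field 𝔽]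
    [CharP 𝔽 p] (hp : p ≠ 2) (r : ℕ) :
    Subsingleton (groupCohomology.H1 (Rep.of (slRep 𝔽 r))) := by
  have h2 : (2 : 𝔽) ≠ 0 := Ring.two_ne_zero (by rwa [ringChar.eq 𝔽 p])
  refine subsingleton_of_forall_eq 0 fun y => ?_
  induction y using H1_induction_on with | h z => ?_
  obtain ⟨x, hx⟩ := IsCocycle₁.isCoboundary₁ h2 fun g h => (mem_cocycles₁_iff z).1 z.2 g h
  exact (H1π_eq_zero_iff z).2 ⟨x, funext hx⟩

/-- If `𝔽` is a finite field of characteristic `p ≠ 2` and `W = 𝔽^r`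
(`r ≥ 1`) is the natural representation of `SL_r(𝔽)`, then `H¹(SL_r(𝔽), W) = 0`. -/
theorem h1_SL_natural_rep_eq_zero (p : ℕ) [Fact p.Prime] (𝔽 : Type u) [Field 𝔽] [Fintype 𝔽]
    [CharP 𝔽 p] (hp : p ≠ 2) (r : ℕ) (hr : 1 ≤ r) :
    Subsingleton (groupCohomology.H1 (Rep.of (slRep 𝔽 r))) :=
  h1_SL_natural_rep_eq_zero_general p 𝔽 hp r
end

section
/- Let 𝔽 be a finite field of characteristic 2 and let H be a subgroup of SL₂(𝔽) that is isomorphic to the dihedral group D_{2n} of order 2n with n odd. Let V = 𝔽² be the natural 2-dimensional representation, with H acting by restriction of the action of SL₂(𝔽) by matrix-vector multiplication. Then H¹(H, V) = 0. -/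
/-!
The rotation subgroup has odd order `n`, which is invertible in `𝔽`, so after subtracting a
coboundary (an average over the rotations) a cocycle vanishes on the rotations. It is then
determined by its value `w` at the reflection `s`, and `w` is fixed by every rotation and by `s`.
In characteristic `2` an element of `SL₂(𝔽)` fixing a nonzero vector is an involution. So for
`n > 1` the generating rotation, of odd order `> 1`, fixes no nonzero vector and `w = 0`. For
`n = 1`, `s - 1` is a nonzero endomorphism of `𝔽²` with square zero, whose kernel is therefore its
image, so `w = s u - u` for some `u`.
-/

open groupCohomology

universe u

theorem isCoboundary₁_of_natCard_ne_zero {k G A : Type*} [Field k] [Group G] [Finite G]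
    [AddCommGroup A] [Module k A] [DistribMulAction G A] [SMulCommClass G k A]
    (hG : (Nat.card G : k) ≠ 0) {f : G → A} (hf : IsCocycle₁ f) : IsCoboundary₁ f := by
  have := Fintype.ofFinite G
  refine ⟨-(Nat.card G : k)⁻¹ • ∑ h, f h, fun g => ?_⟩
  have hsum : g • ∑ h, f h - ∑ h, f h = -((Nat.card G : k) • f g) := by
    calc g • ∑ h, f h - ∑ h, f h = g • ∑ h, f h - ∑ h, f (g * h) := by
          rw [← Equiv.sum_comp (Equiv.mulLeft g) f]; rfl
      _ = -(Nat.card G • f g) := by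
          simp only [hf g, Finset.sum_add_distrib, Finset.smul_sum, Finset.sum_const,
            Finset.card_univ, Nat.card_eq_fintype_card]
          abel
      _ = -((Nat.card G : k) • f g) := by rw [Nat.cast_smul_eq_nsmul]
  rw [smul_comm, ← smul_sub, hsum, smul_neg, neg_smul, neg_neg, inv_smul_smul₀ hG]

theorem IsCocycle₁.sub_coboundary {G A : Type*} [Group G] [AddCommGroup A]
    [DistribMulAction G A] {f : G → A} (hf : IsCocycle₁ f) (x : A) :
    IsCocycle₁ fun g => f g - (g • x - x) := by
  intro g h
  simp only [hf g h, mul_smul, smul_sub]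
  abel

theorem LinearMap.ker_le_range_of_comp_self_eq_zero {K V : Type*} [Field K] [AddCommGroup V]
    [Module K V] [FiniteDimensional K V] (hV : Module.finrank K V ≤ 2) {N : V →ₗ[K] V}
    (hN : N ≠ 0) (hNN : N ∘ₗ N = 0) : ker N ≤ range N := by
  have hle : range N ≤ ker N := by
    rintro _ ⟨v, rfl⟩
    rw [mem_ker, ← comp_apply, hNN, zero_apply]
  have hpos : 0 < Module.finrank K (range N) :=
    Module.finrank_pos_iff.2 (Submodule.nontrivial_iff_ne_bot.2 (range_eq_bot.not.2 hN))
  have hrank := finrank_range_add_finrank_ker N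
  exact (Submodule.eq_of_le_of_finrank_le hle (by omega)).ge

namespace Matrix.SpecialLinearGroup

variable {𝔽 : Type*} [Field 𝔽] [CharP 𝔽 2]

/-- Fixing `w ≠ 0` forces `tr g = 1 + det g = 0`, and then Cayley–Hamilton reads `g² = 1`. -/
theorem mul_self_eq_one_of_smul_eq_self {g : SpecialLinearGroup (Fin 2) 𝔽} {w : Fin 2 → 𝔽}
    (hw : w ≠ 0) (hg : g • w = w) : g * g = 1 := by
  have h2 : (2 : 𝔽) = 0 := CharTwo.two_eq_zero
  have hdet : g 0 0 * g 1 1 - g 0 1 * g 1 0 = 1 := by rw [← det_fin_two]; exact g.2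
  have hfix : (g - 1 : Matrix (Fin 2) (Fin 2) 𝔽).det = 0 :=
    exists_mulVec_eq_zero_iff.1 ⟨w, hw, by rw [sub_mulVec, one_mulVec]; exact sub_eq_zero.2 hg⟩
  simp only [det_fin_two, sub_apply, one_apply_eq, one_apply_ne zero_ne_one,
    one_apply_ne one_ne_zero, sub_zero] at hfix
  have htr : g 0 0 + g 1 1 = 0 := by linear_combination hdet - hfix + h2
  ext i j
  fin_cases i <;> fin_cases j <;>
    simp only [Fin.zero_eta, Fin.mk_one, Fin.isValue, coe_mul, coe_one, mul_apply, Fin.sum_univ_two,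
      one_apply_eq, one_apply_ne zero_ne_one, one_apply_ne one_ne_zero]
  · linear_combination hdet + g 0 0 * htr - (g 0 0 * g 1 1 - g 0 1 * g 1 0) * h2
  · linear_combination g 0 1 * htr
  · linear_combination g 1 0 * htr
  · linear_combination hdet + g 1 1 * htr - (g 0 0 * g 1 1 - g 0 1 * g 1 0) * h2

theorem exists_smul_sub_eq_of_mul_self_eq_one {g : SpecialLinearGroup (Fin 2) 𝔽}
    (hg : g * g = 1) (hg1 : g ≠ 1) {w : Fin 2 → 𝔽} (hw : g • w = w) :
    ∃ u, g • u - u = w := by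
  set N := Matrix.toLin' (g - 1 : Matrix (Fin 2) (Fin 2) 𝔽)
  have hN : N ≠ 0 := by
    rw [Ne, LinearEquiv.map_eq_zero_iff, sub_eq_zero]
    exact fun h => hg1 (Subtype.ext h)
  have hNN : N ∘ₗ N = 0 := by
    have hsq : (g : Matrix (Fin 2) (Fin 2) 𝔽) * g = 1 := congrArg Subtype.val hg
    rw [← Matrix.toLin'_mul, LinearEquiv.map_eq_zero_iff]
    calc (g - 1 : Matrix (Fin 2) (Fin 2) 𝔽) * (g - 1) = g * g + 1 - (g + g) := by noncomm_ring
      _ = 0 := by rw [hsq, CharTwo.add_self_eq_zero, CharTwo.add_self_eq_zero, sub_zero]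
  have hwN : w ∈ LinearMap.ker N := by
    rw [LinearMap.mem_ker, Matrix.toLin'_apply, sub_mulVec, one_mulVec]
    exact sub_eq_zero.2 hw
  obtain ⟨u, hu⟩ := LinearMap.ker_le_range_of_comp_self_eq_zero (by simp) hN hNN hwN
  rw [Matrix.toLin'_apply, sub_mulVec, one_mulVec] at hu
  exact ⟨u, hu⟩

end Matrix.SpecialLinearGroup

namespace DihedralGroup

variable {n : ℕ} {G A : Type*} [Group G] [AddCommGroup A] [DistribMulAction G A]
  (φ : DihedralGroup n →* G) {f : G → A}

theorem map_sr_eq_of_isCocycle₁ (hf : IsCocycle₁ f) (hr : ∀ j, f (φ (r j)) = 0) (j : ZMod n) :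
    f (φ (sr j)) = f (φ (sr 0)) := by
  rw [← zero_add j, ← sr_mul_r, map_mul, hf, hr, smul_zero, zero_add]

theorem r_smul_map_sr_zero (hf : IsCocycle₁ f) (hr : ∀ j, f (φ (r j)) = 0) (j : ZMod n) :
    φ (r j) • f (φ (sr 0)) = f (φ (sr 0)) := by
  have := hf (φ (r j)) (φ (sr 0))
  rwa [← map_mul, r_mul_sr, map_sr_eq_of_isCocycle₁ φ hf hr, hr, add_zero, eq_comm] at this

theorem sr_zero_smul_map_sr_zero (hf : IsCocycle₁ f) :
    φ (sr 0) • f (φ (sr 0)) = -f (φ (sr 0)) := by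
  simpa only [← map_inv, inv_sr] using map_inv_of_isCocycle₁ hf (φ (sr 0))

theorem smul_sub_eq_of_isCocycle₁ (hf : IsCocycle₁ f) (hr : ∀ j, f (φ (r j)) = 0) {u : A}
    (hur : ∀ j, φ (r j) • u = u) (hus : φ (sr 0) • u - u = f (φ (sr 0))) (d : DihedralGroup n) :
    φ d • u - u = f (φ d) := by
  cases d with
  | r j => rw [hur, sub_self, hr]
  | sr j => rw [map_sr_eq_of_isCocycle₁ φ hf hr, ← hus, ← zero_add j, ← sr_mul_r, map_mul,
      mul_smul, hur]

theorem exists_r_invariant_sr_smul_sub_eq {𝔽 : Type*} [Field 𝔽] [CharP 𝔽 2] (hn : Odd n)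
    {φ : DihedralGroup n →* Matrix.SpecialLinearGroup (Fin 2) 𝔽} (hφ : Function.Injective φ)
    {w : Fin 2 → 𝔽} (hwr : ∀ j, φ (r j) • w = w) (hws : φ (sr 0) • w = w) :
    ∃ u, (∀ j, φ (r j) • u = u) ∧ φ (sr 0) • u - u = w := by
  rcases eq_or_ne n 1 with rfl | hn1
  · have hs : φ (sr 0) * φ (sr 0) = 1 := by
      rw [← map_mul, sr_mul_sr, sub_self, ← one_def, map_one]
    have hs1 : φ (sr 0) ≠ 1 := by
      rw [← map_one φ, hφ.ne_iff, one_def]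
      exact nofun
    obtain ⟨u, hu⟩ := Matrix.SpecialLinearGroup.exists_smul_sub_eq_of_mul_self_eq_one hs hs1 hws
    refine ⟨u, fun j => ?_, hu⟩
    rw [Subsingleton.elim j 0, ← one_def, map_one, one_smul]
  · suffices w = 0 from ⟨0, fun _ => smul_zero _, by rw [this, smul_zero, sub_zero]⟩
    by_contra hw
    have h2 : r (1 + 1 : ZMod n) = r 0 := hφ <| by
      rw [← r_mul_r, map_mul, ← one_def, map_one]
      exact Matrix.SpecialLinearGroup.mul_self_eq_one_of_smul_eq_self hw (hwr 1)
    have hdvd : n ∣ 2 := (ZMod.natCast_eq_zero_iff 2 n).1 (by exact_mod_cast r.inj h2)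
    rcases (Nat.dvd_prime Nat.prime_two).1 hdvd with rfl | rfl
    exacts [hn1 rfl, absurd hn (by decide)]

end DihedralGroup

open DihedralGroup in
theorem isCoboundary₁_of_mulEquiv_dihedralGroup {𝔽 : Type*} [Field 𝔽] [CharP 𝔽 2]
    {H : Subgroup (Matrix.SpecialLinearGroup (Fin 2) 𝔽)} {n : ℕ} (hn : Odd n)
    (e : H ≃* DihedralGroup n) {f : H → Fin 2 → 𝔽} (hf : IsCocycle₁ f) : IsCoboundary₁ f := by
  have : NeZero n := ⟨hn.pos.ne'⟩
  have : Finite H := Finite.of_equiv _ e.symm.toEquiv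
  let φ : DihedralGroup n →* H := e.symm.toMonoidHom
  let C := Subgroup.zpowers (φ (r 1))
  have hC : (Nat.card C : 𝔽) ≠ 0 := by
    rw [Nat.card_zpowers, orderOf_injective φ e.symm.injective, orderOf_r_one,
      CharTwo.natCast_eq_ite, if_neg (Nat.not_even_iff_odd.2 hn)]
    exact one_ne_zero
  obtain ⟨x, hx⟩ := isCoboundary₁_of_natCard_ne_zero hC (f := fun c : C => f c) fun a b => hf a b
  have hrC (j : ZMod n) : φ (r j) ∈ C := ⟨j.val, by simp [φ, ← map_zpow]⟩
  let f' := fun g : H => f g - (g • x - x)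
  have hf' : IsCocycle₁ f' := IsCocycle₁.sub_coboundary hf x
  have hr (j : ZMod n) : f' (φ (r j)) = 0 := sub_eq_zero.2 (hx ⟨_, hrC j⟩).symm
  obtain ⟨u, hur, hus⟩ := exists_r_invariant_sr_smul_sub_eq hn
    (φ := H.subtype.comp φ) (H.subtype_injective.comp e.symm.injective)
    (r_smul_map_sr_zero φ hf' hr)
    ((sr_zero_smul_map_sr_zero φ hf').trans (CharTwo.neg_eq _))
  refine ⟨x + u, fun g => ?_⟩
  have hu := smul_sub_eq_of_isCocycle₁ φ hf' hr hur hus (e g)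
  simp only [φ, f', MulEquiv.toMonoidHom_eq_coe, MonoidHom.coe_coe, e.symm_apply_apply] at hu
  calc g • (x + u) - (x + u) = (g • x - x) + (g • u - u) := by rw [smul_add]; abel
    _ = f g := by rw [hu]; abel

theorem h1_dihedral_subgroup_eq_zero_general (𝔽 : Type u) [Field 𝔽] [CharP 𝔽 2]
    (H : Subgroup (Matrix.SpecialLinearGroup (Fin 2) 𝔽)) (n : ℕ) (hn : Odd n)
    (hH : Nonempty (H ≃* DihedralGroup n)) :
    Subsingleton (groupCohomology.H1
      (Rep.of (MonoidHom.comp (slRep 𝔽 2) H.subtype))) := by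
  obtain ⟨e⟩ := hH
  refine subsingleton_of_forall_eq 0 fun c => ?_
  induction c using H1_induction_on with | h f => ?_
  obtain ⟨x, hx⟩ := isCoboundary₁_of_mulEquiv_dihedralGroup hn e ((mem_cocycles₁_iff f).1 f.2)
  exact (H1π_eq_zero_iff f).2 ⟨x, funext hx⟩

/-- If `𝔽` is a finite field of characteristic `2` and `H ≤ SL₂(𝔽)` is
isomorphic to the dihedral group of order `2n` with `n` odd, then `H¹(H, 𝔽²) = 0` for the
natural representation. -/
theorem h1_dihedral_subgroup_eq_zero (𝔽 : Type u) [Field 𝔽] [Fintype 𝔽] [CharP 𝔽 2]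
    (H : Subgroup (Matrix.SpecialLinearGroup (Fin 2) 𝔽)) (n : ℕ) (hn : Odd n)
    (hH : Nonempty (H ≃* DihedralGroup n)) :
    Subsingleton (groupCohomology.H1
      (Rep.of (MonoidHom.comp (slRep 𝔽 2) H.subtype))) :=
  h1_dihedral_subgroup_eq_zero_general 𝔽 H n hn hH
end

section
/- Let 𝔽 be a finite field of characteristic p with p > 2 and let H be a subgroup of SL₂(𝔽) of even order (2 divides |H|). Let V = 𝔽² be the natural 2-dimensional representation, with H acting by restriction of the action of SL₂(𝔽) by matrix-vector multiplication. Then H¹(H, V) = 0. -/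
open groupCohomology

universe u

/-!
In odd characteristic an element of order 2 in `SL₂(𝔽)` is `-1`: by Cayley–Hamilton,
`g² = 1` and `det g = 1` give `(tr g) • g = 2`, so `g` is a scalar `s` with `s² = 1`.
By Cauchy's theorem `H` therefore contains the central element `-1`, which acts on `V` by
the scalar `-1 ≠ 1`.
A central element `z` acting by a scalar `c ≠ 1` kills `H¹`: evaluating a cocycle `f` at
`z * g = g * z` gives `(c - 1) • f g = g • f z - f z`, so `f` is the coboundary of
`(c - 1)⁻¹ • f z`.
-/

namespace groupCohomology

variable {k G : Type u} [Field k] [Group G] {A : Rep k G}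

theorem subsingleton_H1_of_mem_center_of_smul {z : G} (hz : z ∈ Subgroup.center G) {c : k}
    (hc : c ≠ 1) (hρ : ∀ v, A.ρ z v = c • v) : Subsingleton (H1 A) := by
  refine subsingleton_of_forall_eq 0 fun x => H1_induction_on x fun f => ?_
  rw [H1π_eq_zero_iff]
  have hcocycle := (mem_cocycles₁_iff (f : G → A)).1 f.2
  have hf (g : G) : (c - 1) • f g = A.ρ g (f z) - f z := by
    have := hcocycle z g
    rw [← Subgroup.mem_center_iff.1 hz g, hcocycle g z, hρ] at this
    linear_combination (norm := module) -this
  refine ⟨(c - 1)⁻¹ • f z, funext fun g => ?_⟩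
  rw [d₀₁_hom_apply, map_smul, ← smul_sub, ← hf, smul_smul,
    inv_mul_cancel₀ (sub_ne_zero.2 hc), one_smul]

end groupCohomology

theorem slRep_apply (𝔽 : Type u) [Field 𝔽] (n : ℕ) (g : Matrix.SpecialLinearGroup (Fin n) 𝔽)
    (v : Fin n → 𝔽) : slRep 𝔽 n g v = (g : Matrix (Fin n) (Fin n) 𝔽).mulVec v :=
  rfl

namespace Matrix.SpecialLinearGroup

variable {F : Type*} [Field F]

theorem fin_two_coe_eq_one_or_eq_neg_one_of_sq_eq_one (h2 : (2 : F) ≠ 0)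
    {g : SpecialLinearGroup (Fin 2) F} (hg : g ^ 2 = 1) :
    (g : Matrix (Fin 2) (Fin 2) F) = 1 ∨ (g : Matrix (Fin 2) (Fin 2) F) = -1 := by
  set M : Matrix (Fin 2) (Fin 2) F := ↑g
  have hM : M ^ 2 = 1 := by rw [← coe_pow, hg, coe_one]
  have hCH : M ^ 2 - M.trace • M + 1 = 0 := by
    have := M.aeval_self_charpoly
    rw [charpoly_fin_two, g.2] at this
    simpa [Algebra.smul_def] using this
  have htr : M.trace • M = (2 : F) • 1 := by
    rw [hM] at hCH
    rw [two_smul]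
    linear_combination (norm := module) -hCH
  have ht : M.trace ≠ 0 := by
    rintro ht
    rw [ht, zero_smul] at htr
    exact h2 (by simpa using (congrFun (congrFun htr 0) 0).symm)
  obtain ⟨s, hs⟩ : ∃ s : F, M = s • 1 :=
    ⟨M.trace⁻¹ * 2, by rw [← smul_smul, ← htr, inv_smul_smul₀ ht]⟩
  have hs2 : s * s = 1 := by
    simpa [hs, sq, smul_smul] using congrFun (congrFun hM 0) 0
  rcases mul_self_eq_one_iff.1 hs2 with rfl | rfl
  · exact .inl (by rw [hs, one_smul])
  · exact .inr (by rw [hs, neg_one_smul])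

theorem fin_two_coe_eq_neg_one_of_orderOf_eq_two (h2 : (2 : F) ≠ 0)
    {g : SpecialLinearGroup (Fin 2) F} (hg : orderOf g = 2) :
    (g : Matrix (Fin 2) (Fin 2) F) = -1 := by
  refine (fin_two_coe_eq_one_or_eq_neg_one_of_sq_eq_one h2 ?_).resolve_left fun h1 => ?_
  · simpa only [hg] using pow_orderOf_eq_one g
  · rw [show g = 1 from Subtype.ext h1, orderOf_one] at hg
    omega

end Matrix.SpecialLinearGroup

theorem h1_even_order_subgroup_eq_zero_general (p : ℕ) (𝔽 : Type u) [Field 𝔽]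
    [Fintype 𝔽] [CharP 𝔽 p] (hp : 2 < p)
    (H : Subgroup (Matrix.SpecialLinearGroup (Fin 2) 𝔽)) (hH : 2 ∣ Nat.card H) :
    Subsingleton (groupCohomology.H1
      (Rep.of (MonoidHom.comp (slRep 𝔽 2) H.subtype))) := by
  have : Fact (2 < p) := ⟨hp⟩
  have : Fact (Nat.Prime 2) := ⟨Nat.prime_two⟩
  have h2 : (2 : 𝔽) ≠ 0 := by
    exact_mod_cast CharP.cast_ne_zero_of_ne_of_prime 𝔽 Nat.prime_two hp.ne'
  obtain ⟨z, hz⟩ := exists_prime_orderOf_dvd_card' 2 hH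
  have hz_neg : ((z : Matrix.SpecialLinearGroup (Fin 2) 𝔽) : Matrix (Fin 2) (Fin 2) 𝔽) = -1 :=
    Matrix.SpecialLinearGroup.fin_two_coe_eq_neg_one_of_orderOf_eq_two h2
      (by rwa [Subgroup.orderOf_coe])
  refine subsingleton_H1_of_mem_center_of_smul (z := z) ?_ (CharP.neg_one_ne_one 𝔽 p) fun v => ?_
  · exact Subgroup.mem_center_iff.2 fun g => Subtype.ext <| Subtype.ext <| by simp [hz_neg]
  · change slRep 𝔽 2 z v = _
    rw [slRep_apply, hz_neg, Matrix.neg_mulVec, Matrix.one_mulVec, neg_one_smul]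

/-- If `𝔽` is a finite field of characteristic `p > 2` and `H ≤ SL₂(𝔽)` has
even order, then `H¹(H, 𝔽²) = 0` for the natural representation. -/
theorem h1_even_order_subgroup_eq_zero (p : ℕ) [Fact p.Prime] (𝔽 : Type u) [Field 𝔽]
    [Fintype 𝔽] [CharP 𝔽 p] (hp : 2 < p)
    (H : Subgroup (Matrix.SpecialLinearGroup (Fin 2) 𝔽)) (hH : 2 ∣ Nat.card H) :
    Subsingleton (groupCohomology.H1
      (Rep.of (MonoidHom.comp (slRep 𝔽 2) H.subtype))) :=
  h1_even_order_subgroup_eq_zero_general p 𝔽 hp H hH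
end

section
/- Let 𝔽 be a finite field of characteristic p, let Λ ⊆ 𝔽 be an 𝔽_p-linear subspace of dimension k = dim_{𝔽_p} Λ, and let Q = { (1, λ; 0, 1) : λ ∈ Λ } be the corresponding subgroup of upper-triangular unipotent matrices in SL₂(𝔽), acting on V = 𝔽² by matrix-vector multiplication. Then the 𝔽-vector space H¹(Q, V) has dimension dim_𝔽 H¹(Q, V) = k if p > 2, and dim_𝔽 H¹(Q, V) = k − 1 if p = 2 and k ≥ 1. -/
open groupCohomology

universe u

/-- The unipotent upper-triangular matrix `(1, l; 0, 1)` as an element of `SL₂(𝔽)`. -/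
def unipMat {𝔽 : Type u} [Field 𝔽] (l : 𝔽) : Matrix.SpecialLinearGroup (Fin 2) 𝔽 :=
  ⟨!![1, l; 0, 1], by simp [Matrix.det_fin_two_of]⟩

theorem unipMat_mul {𝔽 : Type u} [Field 𝔽] (a b : 𝔽) :
    unipMat a * unipMat b = unipMat (a + b) := by
  apply Subtype.ext
  rw [Matrix.SpecialLinearGroup.coe_mul]
  simp [unipMat, Matrix.mul_fin_two, add_comm]

theorem unipMat_zero {𝔽 : Type u} [Field 𝔽] : unipMat (0 : 𝔽) = 1 := by
  apply Subtype.ext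
  simp [unipMat, Matrix.SpecialLinearGroup.coe_one, Matrix.one_fin_two]

/-- The subgroup `{(1, λ; 0, 1) : λ ∈ Λ}` of `SL₂(𝔽)` attached to an additive
subgroup `Λ ⊆ 𝔽`. -/
def unipSubgroup {𝔽 : Type u} [Field 𝔽] (Λ : AddSubgroup 𝔽) :
    Subgroup (Matrix.SpecialLinearGroup (Fin 2) 𝔽) where
  carrier := {A | ∃ l ∈ Λ, A = unipMat l}
  one_mem' := ⟨0, Λ.zero_mem, unipMat_zero.symm⟩
  mul_mem' := by
    rintro _ _ ⟨a, ha, rfl⟩ ⟨b, hb, rfl⟩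
    exact ⟨a + b, Λ.add_mem ha hb, unipMat_mul a b⟩
  inv_mem' := by
    rintro _ ⟨a, ha, rfl⟩
    exact ⟨-a, Λ.neg_mem ha,
      inv_eq_of_mul_eq_one_right (by rw [unipMat_mul, add_neg_cancel, unipMat_zero])⟩


/-!
Write a 1-cocycle as `f = (a, b)` and `λ_g` for the upper-right entry of `g ∈ Q`. The cocycle
identity says that `b` is additive and `a (g h) = a g + a h + λ_g b h`; since `Q` is abelian this
forces `λ_g b h = λ_h b g`, i.e. `b = c λ` for a single scalar `c`. The cocycles with `c = 0` are
the additive maps `a`, a space isomorphic to `Hom(Λ, 𝔽)` of `𝔽`-dimension `k`. If `2 ≠ 0`, the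
cocycle `g ↦ (λ_g² / 2, λ_g)` has `c = 1`, so `dim Z¹ = k + 1`; in characteristic `2` every `g`
has order at most `2`, which forces `c = 0`, so `dim Z¹ = k`. Finally `V^Q = 𝔽 e₀` when `Λ ≠ 0`,
so the coboundaries form a line and `dim H¹ = dim Z¹ - 1`.
-/

open Module

section LowDegree

variable {k G : Type u} [Field k] [Group G] (A : Rep k G)

theorem finrank_coboundaries₁_add_finrank_invariants [FiniteDimensional k A] :
    finrank k (coboundaries₁ A) + finrank k A.ρ.invariants = finrank k A := by
  rw [← d₀₁_ker_eq_invariants]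
  exact LinearMap.finrank_range_add_finrank_ker _

theorem finrank_H1_add_finrank_coboundaries₁ [Finite G] [FiniteDimensional k A] :
    finrank k (H1 A) + finrank k (coboundaries₁ A) = finrank k (cocycles₁ A) := by
  have hsurj : Function.Surjective (H1π A).hom :=
    (ModuleCat.epi_iff_surjective _).1 inferInstance
  have hker : LinearMap.ker (H1π A).hom = (coboundaries₁ A).comap (cocycles₁ A).subtype := by
    ext x
    exact H1π_eq_zero_iff x
  have h := LinearMap.finrank_range_add_finrank_ker (H1π A).hom
  rwa [LinearMap.range_eq_top.2 hsurj, finrank_top, hker,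
    (Submodule.comapSubtypeEquivOfLe (coboundaries₁_le_cocycles₁ A)).finrank_eq] at h

end LowDegree

theorem finrank_addMonoidHom_eq_finrank_zmod (p : ℕ) [Fact p.Prime] (M K : Type*)
    [AddCommGroup M] [Module (ZMod p) M] [Module.Finite (ZMod p) M] [Field K]
    [Algebra (ZMod p) K] :
    finrank K (M →+ K) = finrank (ZMod p) M :=
  let e : (M →+ K) ≃ₗ[K] (M →ₗ[ZMod p] K) :=
    { AddMonoidHom.toZModLinearMapEquiv p with map_smul' := fun _ _ => rfl }
  e.finrank_eq.trans (finrank_linearMap_self _ _ _)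

section UnipotentSubgroup

variable {𝔽 : Type u} [Field 𝔽] {Λ : AddSubgroup 𝔽}

def unipEntry (g : unipSubgroup Λ) : 𝔽 := (g : Matrix.SpecialLinearGroup (Fin 2) 𝔽) 0 1

theorem unipMat_unipEntry (g : unipSubgroup Λ) : unipMat (unipEntry g) = g := by
  obtain ⟨l, -, hg⟩ := g.2
  rw [unipEntry, hg]
  rfl

theorem unipEntry_mem (g : unipSubgroup Λ) : unipEntry g ∈ Λ := by
  obtain ⟨l, hl, hg⟩ := g.2
  simpa [unipEntry, hg, unipMat] using hl

theorem unipEntry_injective : Function.Injective (unipEntry (Λ := Λ)) := fun g h hgh =>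
  Subtype.ext <| by rw [← unipMat_unipEntry g, ← unipMat_unipEntry h, hgh]

theorem unipEntry_mul (g h : unipSubgroup Λ) :
    unipEntry (g * h) = unipEntry g + unipEntry h := by
  have : unipMat (unipEntry (g * h)) = unipMat (unipEntry g + unipEntry h) := by
    rw [← unipMat_mul, unipMat_unipEntry, unipMat_unipEntry, unipMat_unipEntry]
    rfl
  simpa [unipMat] using congrArg (fun A : Matrix.SpecialLinearGroup (Fin 2) 𝔽 => A 0 1) this

theorem unipSubgroup_mul_comm (g h : unipSubgroup Λ) : g * h = h * g :=
  unipEntry_injective <| by rw [unipEntry_mul, unipEntry_mul, add_comm]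

theorem subsingleton_unipSubgroup (hΛ : ∀ l ∈ Λ, l = 0) : Subsingleton (unipSubgroup Λ) :=
  ⟨fun g h => unipEntry_injective <| by rw [hΛ _ (unipEntry_mem g), hΛ _ (unipEntry_mem h)]⟩

def unipElem (l : 𝔽) (hl : l ∈ Λ) : unipSubgroup Λ := ⟨unipMat l, l, hl, rfl⟩

@[simp]
theorem unipEntry_unipElem (l : 𝔽) (hl : l ∈ Λ) : unipEntry (unipElem l hl) = l := by
  simp [unipEntry, unipElem, unipMat]

theorem unipElem_unipEntry (g : unipSubgroup Λ) :
    unipElem (unipEntry g) (unipEntry_mem g) = g :=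
  unipEntry_injective <| unipEntry_unipElem _ _

theorem unipElem_add (a b : Λ) :
    unipElem ((a + b : Λ) : 𝔽) (a + b).2 = unipElem (a : 𝔽) a.2 * unipElem (b : 𝔽) b.2 :=
  unipEntry_injective <| by simp [unipEntry_mul]

variable (Λ) in
noncomputable abbrev unipRep : Rep 𝔽 (unipSubgroup Λ) :=
  Rep.of ((slRep 𝔽 2).comp (unipSubgroup Λ).subtype)

theorem unipRep_ρ_apply (g : unipSubgroup Λ) (v : Fin 2 → 𝔽) :
    (unipRep Λ).ρ g v = ![v 0 + unipEntry g * v 1, v 1] := by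
  change (g : Matrix.SpecialLinearGroup (Fin 2) 𝔽).1.mulVec v = _
  rw [← unipMat_unipEntry g]
  ext i
  fin_cases i <;> simp [unipMat, Matrix.mulVec, dotProduct, Fin.sum_univ_two]

end UnipotentSubgroup

section Cohomology

variable {𝔽 : Type u} [Field 𝔽] {Λ : AddSubgroup 𝔽}

theorem unipRep_invariants_eq {g₀ : unipSubgroup Λ} (hg₀ : unipEntry g₀ ≠ 0) :
    (unipRep Λ).ρ.invariants = 𝔽 ∙ (Pi.single 0 1 : Fin 2 → 𝔽) := by
  ext v
  rw [Representation.mem_invariants, Submodule.mem_span_singleton]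
  constructor
  · intro hv
    have hv₁ : v 1 = 0 := by
      have h := congrFun (hv g₀) 0
      rw [unipRep_ρ_apply] at h
      simpa [hg₀] using h
    refine ⟨v 0, funext fun i => ?_⟩
    fin_cases i <;> simp [hv₁]
  · rintro ⟨a, rfl⟩ g
    rw [unipRep_ρ_apply]
    ext i
    fin_cases i <;> simp

theorem finrank_coboundaries₁_unipRep {g₀ : unipSubgroup Λ} (hg₀ : unipEntry g₀ ≠ 0) :
    finrank 𝔽 (coboundaries₁ (unipRep Λ)) = 1 := by
  have h := finrank_coboundaries₁_add_finrank_invariants (unipRep Λ)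
  rw [unipRep_invariants_eq hg₀, finrank_span_singleton (by simp)] at h
  have : finrank 𝔽 (unipRep Λ) = 2 := finrank_fin_fun 𝔽
  omega

theorem unipCocycle_mul_apply_zero (f : cocycles₁ (unipRep Λ)) (g h : unipSubgroup Λ) :
    f (g * h) 0 = f h 0 + unipEntry g * f h 1 + f g 0 := by
  rw [(mem_cocycles₁_iff f).1 f.2 g h, unipRep_ρ_apply]
  rfl

theorem unipEntry_mul_cocycle_apply_one_comm (f : cocycles₁ (unipRep Λ))
    (g h : unipSubgroup Λ) : unipEntry g * f h 1 = unipEntry h * f g 1 := by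
  have hgh := unipCocycle_mul_apply_zero f g h
  have hhg := unipCocycle_mul_apply_zero f h g
  rw [unipSubgroup_mul_comm] at hgh
  linear_combination hhg - hgh

noncomputable def unipCocycleSnd (g₀ : unipSubgroup Λ) : cocycles₁ (unipRep Λ) →ₗ[𝔽] 𝔽 where
  toFun f := f g₀ 1
  map_add' _ _ := rfl
  map_smul' _ _ := rfl

theorem unipCocycle_apply_one_eq_zero {g₀ : unipSubgroup Λ} (hg₀ : unipEntry g₀ ≠ 0)
    {f : cocycles₁ (unipRep Λ)} (hf : unipCocycleSnd g₀ f = 0) (g : unipSubgroup Λ) :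
    f g 1 = 0 := by
  have h := unipEntry_mul_cocycle_apply_one_comm f g₀ g
  rw [show f g₀ 1 = 0 from hf, mul_zero] at h
  exact (mul_eq_zero.1 h).resolve_left hg₀

noncomputable def unipCocycleOfAddMonoidHom (φ : Λ →+ 𝔽) : cocycles₁ (unipRep Λ) :=
  ⟨fun g => ![φ ⟨unipEntry g, unipEntry_mem g⟩, 0], by
    rw [mem_cocycles₁_iff]
    intro g h
    have hφ : φ ⟨unipEntry (g * h), unipEntry_mem _⟩ =
        φ ⟨unipEntry g, unipEntry_mem g⟩ + φ ⟨unipEntry h, unipEntry_mem h⟩ := by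
      rw [← map_add]
      exact congrArg φ (Subtype.ext (unipEntry_mul g h))
    rw [unipRep_ρ_apply]
    ext i
    fin_cases i <;> simp [hφ, add_comm]⟩

theorem unipCocycleOfAddMonoidHom_apply (φ : Λ →+ 𝔽) (g : unipSubgroup Λ) :
    unipCocycleOfAddMonoidHom φ g = ![φ ⟨unipEntry g, unipEntry_mem g⟩, 0] := rfl

noncomputable def kerUnipCocycleSndEquiv {g₀ : unipSubgroup Λ} (hg₀ : unipEntry g₀ ≠ 0) :
    LinearMap.ker (unipCocycleSnd g₀) ≃ₗ[𝔽] (Λ →+ 𝔽) where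
  toFun f := AddMonoidHom.mk' (fun l => f.1 (unipElem l l.2) 0) fun a b => by
    rw [unipElem_add, unipCocycle_mul_apply_zero, unipCocycle_apply_one_eq_zero hg₀ f.2]
    ring
  map_add' _ _ := rfl
  map_smul' _ _ := rfl
  invFun φ := ⟨unipCocycleOfAddMonoidHom φ, rfl⟩
  left_inv f := by
    ext g i
    fin_cases i
    · simp [unipCocycleOfAddMonoidHom_apply, unipElem_unipEntry]
    · simp [unipCocycleOfAddMonoidHom_apply, unipCocycle_apply_one_eq_zero hg₀ f.2]
  right_inv φ := by
    ext l
    simp [unipCocycleOfAddMonoidHom_apply]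

noncomputable def unipSquareCocycle (h2 : (2 : 𝔽) ≠ 0) : cocycles₁ (unipRep Λ) :=
  ⟨fun g => ![unipEntry g ^ 2 / 2, unipEntry g], by
    rw [mem_cocycles₁_iff]
    intro g h
    rw [unipRep_ρ_apply]
    ext i
    fin_cases i
    · simp [unipEntry_mul]
      field_simp
      ring
    · simp [unipEntry_mul, add_comm]⟩

theorem unipCocycleSnd_surjective (h2 : (2 : 𝔽) ≠ 0) {g₀ : unipSubgroup Λ}
    (hg₀ : unipEntry g₀ ≠ 0) : Function.Surjective (unipCocycleSnd g₀) := fun t =>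
  ⟨(t / unipEntry g₀) • unipSquareCocycle h2, by
    rw [map_smul, smul_eq_mul]
    exact div_mul_cancel₀ t hg₀⟩

theorem unipCocycleSnd_eq_zero (h2 : (2 : 𝔽) = 0) {g₀ : unipSubgroup Λ}
    (hg₀ : unipEntry g₀ ≠ 0) : unipCocycleSnd g₀ = 0 := by
  ext f
  have hsq : g₀ * g₀ = 1 :=
    unipEntry_injective <| by rw [unipEntry_mul, ← two_mul, h2, zero_mul]; simp [unipEntry]
  have h := unipCocycle_mul_apply_zero f g₀ g₀
  rw [hsq, cocycles₁_map_one, Pi.zero_apply] at h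
  have h' : unipEntry g₀ * f g₀ 1 = 0 := by linear_combination -h - h2 * f g₀ 0
  exact (mul_eq_zero.1 h').resolve_left hg₀

theorem finrank_cocycles₁_unipRep [Finite 𝔽] (h2 : (2 : 𝔽) ≠ 0) {g₀ : unipSubgroup Λ}
    (hg₀ : unipEntry g₀ ≠ 0) :
    finrank 𝔽 (cocycles₁ (unipRep Λ)) = finrank 𝔽 (Λ →+ 𝔽) + 1 := by
  have h := LinearMap.finrank_range_add_finrank_ker (unipCocycleSnd g₀)
  rw [LinearMap.range_eq_top.2 (unipCocycleSnd_surjective h2 hg₀), finrank_top, finrank_self,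
    (kerUnipCocycleSndEquiv hg₀).finrank_eq] at h
  omega

theorem finrank_cocycles₁_unipRep_of_two_eq_zero (h2 : (2 : 𝔽) = 0) {g₀ : unipSubgroup Λ}
    (hg₀ : unipEntry g₀ ≠ 0) :
    finrank 𝔽 (cocycles₁ (unipRep Λ)) = finrank 𝔽 (Λ →+ 𝔽) := by
  rw [← (kerUnipCocycleSndEquiv hg₀).finrank_eq, unipCocycleSnd_eq_zero h2 hg₀,
    LinearMap.ker_zero, finrank_top]

end Cohomology

/-- Let `𝔽` be a finite field of characteristic `p`, `Λ ⊆ 𝔽` an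
`𝔽_p`-subspace of dimension `k`, and `Q = {(1, λ; 0, 1) : λ ∈ Λ} ≤ SL₂(𝔽)` acting on
`V = 𝔽²`. Then `dim_𝔽 H¹(Q, V) = k` if `p > 2`, and `= k - 1` if `p = 2` (and `k ≥ 1`). -/
theorem finrank_h1_unipotent (p : ℕ) [Fact p.Prime] (𝔽 : Type u) [Field 𝔽] [Fintype 𝔽]
    [CharP 𝔽 p] :
    letI := ZMod.algebra 𝔽 p
    ∀ (Λ : Submodule (ZMod p) 𝔽) (k : ℕ), k = Module.finrank (ZMod p) Λ →
      (2 < p → Module.finrank 𝔽 (groupCohomology.H1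
        (Rep.of (MonoidHom.comp (slRep 𝔽 2) (unipSubgroup Λ.toAddSubgroup).subtype))) = k) ∧
      (p = 2 → 1 ≤ k → Module.finrank 𝔽 (groupCohomology.H1
        (Rep.of (MonoidHom.comp (slRep 𝔽 2) (unipSubgroup Λ.toAddSubgroup).subtype))) = k - 1) := by
  let _ := ZMod.algebra 𝔽 p
  intro Λ k hk
  change (2 < p → finrank 𝔽 (H1 (unipRep Λ.toAddSubgroup)) = k) ∧
    (p = 2 → 1 ≤ k → finrank 𝔽 (H1 (unipRep Λ.toAddSubgroup)) = k - 1)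
  have hHom : finrank 𝔽 (Λ.toAddSubgroup →+ 𝔽) = k :=
    hk ▸ finrank_addMonoidHom_eq_finrank_zmod p Λ 𝔽
  have hH1 := finrank_H1_add_finrank_coboundaries₁ (unipRep Λ.toAddSubgroup)
  have exists_g₀ (hk1 : 1 ≤ k) : ∃ g₀ : unipSubgroup Λ.toAddSubgroup, unipEntry g₀ ≠ 0 := by
    obtain ⟨l, hl, hl0⟩ := Submodule.exists_mem_ne_zero_of_ne_bot fun hΛ : Λ = ⊥ => by
      rw [hΛ, finrank_bot] at hk
      omega
    exact ⟨unipElem l hl, by rwa [unipEntry_unipElem]⟩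
  refine ⟨fun hp => ?_, fun hp hk1 => ?_⟩
  · rcases Nat.eq_zero_or_pos k with rfl | hk1
    · have := subsingleton_unipSubgroup (Λ := Λ.toAddSubgroup) fun l hl => by
        rwa [Submodule.finrank_eq_zero.1 hk.symm] at hl
      have := ModuleCat.isZero_iff_subsingleton.1
        (isZero_groupCohomology_succ_of_subsingleton (unipRep Λ.toAddSubgroup) 0)
      exact finrank_zero_of_subsingleton
    · have h2 : (2 : 𝔽) ≠ 0 := Ring.two_ne_zero (by rw [ringChar.eq 𝔽 p]; omega)
      obtain ⟨g₀, hg₀⟩ := exists_g₀ hk1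
      rw [finrank_coboundaries₁_unipRep hg₀, finrank_cocycles₁_unipRep h2 hg₀, hHom] at hH1
      omega
  · subst hp
    have h2 : (2 : 𝔽) = 0 := by exact_mod_cast CharP.cast_eq_zero 𝔽 2
    obtain ⟨g₀, hg₀⟩ := exists_g₀ hk1
    rw [finrank_coboundaries₁_unipRep hg₀, finrank_cocycles₁_unipRep_of_two_eq_zero h2 hg₀,
      hHom] at hH1
    omega
end

section
/- Let 𝔽 be a finite field of characteristic p and let H be a subgroup of SL₂(𝔽) whose p-Sylow subgroup Q is normal in H, is contained in the group of upper-triangular unipotent matrices { (1, λ; 0, 1) : λ ∈ 𝔽 }, and is such that H/Q is cyclic of order prime to p. Let V = 𝔽² with H acting by matrix-vector multiplication. Then for all σ, τ ∈ Q with σ ≠ 1 and τ ≠ 1, the kernels of the restriction maps coincide: ker(H¹(H, V) → H¹(⟨σ⟩, V)) = ker(H¹(H, V) → H¹(⟨τ⟩, V)). -/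
open groupCohomology

universe u

section Restriction

variable {k G V : Type u} [CommRing k] [Group G] [AddCommGroup V] [Module k V]

/-- Restriction of 1-cocycles to a subgroup. -/
noncomputable def resOneCocycles (ρ : Representation k G V) (S : Subgroup G) :
    cocycles₁ (Rep.of ρ) →ₗ[k] cocycles₁ (Rep.of (MonoidHom.comp ρ S.subtype)) :=
  LinearMap.codRestrict _
    ((LinearMap.funLeft k _ (fun s : S => (s : G))).comp
      (cocycles₁ (Rep.of ρ)).subtype)
    (fun f => (mem_cocycles₁_iff (A := Rep.of (MonoidHom.comp ρ S.subtype)) _).2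
      fun g h => (mem_cocycles₁_iff (A := Rep.of ρ) f.1).1 f.2 g h)

/-- The restriction map `H¹(G, V) → H¹(S, V)` on first group cohomology,
for a subgroup `S ≤ G`. -/
noncomputable def H1Res (ρ : Representation k G V) (S : Subgroup G) :
    (cocycles₁ (Rep.of ρ) ⧸
        (coboundaries₁ (Rep.of ρ)).comap (cocycles₁ (Rep.of ρ)).subtype) →ₗ[k]
      (cocycles₁ (Rep.of (MonoidHom.comp ρ S.subtype)) ⧸
        (coboundaries₁ (Rep.of (MonoidHom.comp ρ S.subtype))).comap
          (cocycles₁ (Rep.of (MonoidHom.comp ρ S.subtype))).subtype) :=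
  Submodule.mapQ _ _ (resOneCocycles ρ S) (by
    intro f hf
    rcases hf with ⟨x, hx⟩
    exact ⟨x, funext fun g => congrFun hx g⟩)

end Restriction

/-! If `σ` and `τ` commute, the cocycle identity applied to `στ = τσ` gives
`(σ - 1) f(τ) = (τ - 1) f(σ)` for every 1-cocycle `f`. A 1-cocycle restricts to a coboundary on
`⟨σ⟩` iff `f(σ) ∈ (σ - 1)V`. For transvections `σ = (1, a; 0, 1)` and `τ = (1, b; 0, 1)` with
`a, b ≠ 0`, `(σ - 1)V = (τ - 1)V = 𝔽e₁`, and the identity reads `a f(τ)₂ = b f(σ)₂`; so `f(σ)₂`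
vanishes iff `f(τ)₂` does. -/

open scoped Matrix

namespace groupCohomology

variable {k G : Type u} [CommRing k] [Group G] {A : Rep k G}

def cocycles₁.ker (f : cocycles₁ A) : Subgroup G where
  carrier := {g | f g = 0}
  one_mem' := cocycles₁_map_one f
  mul_mem' {g h} (hg : f g = 0) (hh : f h = 0) := by
    show f (g * h) = 0
    rw [(mem_cocycles₁_iff f).1 f.2 g h, hg, hh, map_zero, add_zero]
  inv_mem' {g} (hg : f g = 0) := by
    have h := (mem_cocycles₁_iff f).1 f.2 g⁻¹ g
    rwa [inv_mul_cancel, cocycles₁_map_one, hg, map_zero, zero_add, eq_comm] at h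

theorem cocycles₁_sub_eq_of_commute (f : cocycles₁ A) {g h : G} (hgh : Commute g h) :
    A.ρ g (f h) - f h = A.ρ h (f g) - f g := by
  rw [sub_eq_sub_iff_add_eq_add, ← (mem_cocycles₁_iff f).1 f.2, ← (mem_cocycles₁_iff f).1 f.2,
    hgh.eq]

end groupCohomology

/-- Subtracting the coboundary of `x` leaves a cocycle whose kernel contains `g`, hence `⟨g⟩`. -/
theorem mk_mem_ker_H1Res_zpowers_iff {k G V : Type u} [CommRing k] [Group G] [AddCommGroup V]
    [Module k V] (ρ : Representation k G V) (f : cocycles₁ (Rep.of ρ)) (g : G) :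
    Submodule.Quotient.mk f ∈ LinearMap.ker (H1Res ρ (Subgroup.zpowers g)) ↔
      ∃ x : V, ρ g x - x = f g := by
  simp only [LinearMap.mem_ker, H1Res, Submodule.mapQ_apply, Submodule.Quotient.mk_eq_zero]
  constructor
  · rintro ⟨x, hx⟩
    exact ⟨x, congrFun hx ⟨g, Subgroup.mem_zpowers g⟩⟩
  · rintro ⟨x, hx⟩
    let f' : cocycles₁ (Rep.of ρ) := f - ⟨_, d₀₁_apply_mem_cocycles₁ (A := Rep.of ρ) x⟩
    have hf' : ∀ h, f' h = f h - (ρ h x - x) := fun h => rfl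
    have hg : g ∈ cocycles₁.ker f' := by
      show f' g = 0
      rw [hf', hx, sub_self]
    refine ⟨x, funext fun ⟨h, hh⟩ => ?_⟩
    have hh' : f' h = 0 := Subgroup.zpowers_le.2 hg hh
    rw [hf', sub_eq_zero] at hh'
    exact hh'.symm

section Unipotent

variable {R : Type*}

theorem unipotent_commute [Semiring R] (a b : R) :
    Commute !![1, a; 0, 1] !![1, b; 0, 1] := by
  simp [commute_iff_eq, add_comm]

theorem unipotent_mulVec_sub [Ring R] (a : R) (v : Fin 2 → R) :
    !![1, a; 0, 1] *ᵥ v - v = ![a * v 1, 0] := by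
  ext i
  fin_cases i <;> simp [dotProduct, Fin.sum_univ_two]

theorem exists_unipotent_mulVec_sub_eq_iff [Field R] {a : R} (ha : a ≠ 0) (w : Fin 2 → R) :
    (∃ v, !![1, a; 0, 1] *ᵥ v - v = w) ↔ w 1 = 0 := by
  simp_rw [unipotent_mulVec_sub]
  constructor
  · rintro ⟨v, rfl⟩
    rfl
  · intro hw
    refine ⟨![0, w 0 / a], ?_⟩
    ext i
    fin_cases i <;> simp [mul_div_cancel₀ _ ha, hw]

theorem ne_zero_of_coe_eq_unipotent [CommRing R] {x : Matrix.SpecialLinearGroup (Fin 2) R}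
    {a : R} (hx : (x : Matrix (Fin 2) (Fin 2) R) = !![1, a; 0, 1]) (hx1 : x ≠ 1) : a ≠ 0 := by
  rintro rfl
  exact hx1 (Subtype.ext (hx.trans Matrix.one_fin_two.symm))

end Unipotent

theorem ker_H1Res_zpowers_eq_of_unipotent {k G : Type u} [Field k] [Group G]
    (ρ : Representation k G (Fin 2 → k)) {σ τ : G} (hστ : Commute σ τ) {a b : k}
    (ha : a ≠ 0) (hb : b ≠ 0) (hρσ : ∀ v, ρ σ v = !![1, a; 0, 1] *ᵥ v)
    (hρτ : ∀ v, ρ τ v = !![1, b; 0, 1] *ᵥ v) :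
    LinearMap.ker (H1Res ρ (Subgroup.zpowers σ)) =
      LinearMap.ker (H1Res ρ (Subgroup.zpowers τ)) := by
  ext y
  obtain ⟨f, rfl⟩ := Submodule.Quotient.mk_surjective _ y
  have key : a * f τ 1 = b * f σ 1 := by
    have h := cocycles₁_sub_eq_of_commute f hστ
    rw [hρσ, hρτ, unipotent_mulVec_sub, unipotent_mulVec_sub] at h
    simpa using congrFun h 0
  simp_rw [mk_mem_ker_H1Res_zpowers_iff, hρσ, hρτ, exists_unipotent_mulVec_sub_eq_iff ha,
    exists_unipotent_mulVec_sub_eq_iff hb]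
  constructor <;> intro h
  · simpa [h, ha] using key
  · simpa [h, hb] using key.symm

theorem ker_res_eq_ker_res_general (𝔽 : Type u) [Field 𝔽]
    (H : Subgroup (Matrix.SpecialLinearGroup (Fin 2) 𝔽))
    (Q : Subgroup H)
    (hQunip : ∀ x : H, x ∈ Q → ∃ l : 𝔽,
      ((x : Matrix.SpecialLinearGroup (Fin 2) 𝔽) : Matrix (Fin 2) (Fin 2) 𝔽) = !![1, l; 0, 1])
    (σ τ : H) (hσQ : σ ∈ Q) (hτQ : τ ∈ Q) (hσ : σ ≠ 1) (hτ : τ ≠ 1) :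
    LinearMap.ker (H1Res (MonoidHom.comp (slRep 𝔽 2) H.subtype) (Subgroup.zpowers σ)) =
      LinearMap.ker (H1Res (MonoidHom.comp (slRep 𝔽 2) H.subtype) (Subgroup.zpowers τ)) := by
  choose l hl using hQunip
  have hcomm : Commute σ τ := Subtype.ext <| Subtype.ext <| by
    simp only [Subgroup.coe_mul, Matrix.SpecialLinearGroup.coe_mul, hl σ hσQ, hl τ hτQ]
    exact (unipotent_commute _ _).eq
  exact ker_H1Res_zpowers_eq_of_unipotent _ hcomm
    (ne_zero_of_coe_eq_unipotent (hl σ hσQ) (by simpa using hσ))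
    (ne_zero_of_coe_eq_unipotent (hl τ hτQ) (by simpa using hτ))
    (fun v => by rw [← hl σ hσQ]; rfl) (fun v => by rw [← hl τ hτQ]; rfl)

/-- Let `𝔽` be a finite field of characteristic `p` and `H ≤ SL₂(𝔽)` a
subgroup whose `p`-Sylow subgroup `Q` is normal, consists of upper-triangular unipotent
matrices, and has cyclic quotient `H/Q` of order prime to `p`; let `V = 𝔽²`. Then for all
`σ, τ ∈ Q` with `σ ≠ 1 ≠ τ`, the kernels of the restriction maps `H¹(H, V) → H¹(⟨σ⟩, V)`
and `H¹(H, V) → H¹(⟨τ⟩, V)` coincide. -/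
theorem ker_res_eq_ker_res (p : ℕ) [Fact p.Prime] (𝔽 : Type u) [Field 𝔽] [Fintype 𝔽]
    [CharP 𝔽 p] (H : Subgroup (Matrix.SpecialLinearGroup (Fin 2) 𝔽))
    (Q : Subgroup H) (hQnormal : Q.Normal)
    (hQsylow : ∃ P : Sylow p H, (P : Subgroup H) = Q)
    (hQunip : ∀ x : H, x ∈ Q → ∃ l : 𝔽,
      ((x : Matrix.SpecialLinearGroup (Fin 2) 𝔽) : Matrix (Fin 2) (Fin 2) 𝔽) = !![1, l; 0, 1])
    (hcyc : IsCyclic (H ⧸ Q)) (hcop : ¬ p ∣ Nat.card (H ⧸ Q))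
    (σ τ : H) (hσQ : σ ∈ Q) (hτQ : τ ∈ Q) (hσ : σ ≠ 1) (hτ : τ ≠ 1) :
    LinearMap.ker (H1Res (MonoidHom.comp (slRep 𝔽 2) H.subtype) (Subgroup.zpowers σ)) =
      LinearMap.ker (H1Res (MonoidHom.comp (slRep 𝔽 2) H.subtype) (Subgroup.zpowers τ)) :=
  ker_res_eq_ker_res_general 𝔽 H Q hQunip σ τ hσQ hτQ hσ hτ
end

section
/- Let p be a prime, k ≥ 1, q = p^k, and let M be a field containing the finite field 𝔽_q. Let f ∈ M and let β₁, …, β_k ∈ 𝔽_q be linearly independent over 𝔽_p. Then, inside a fixed algebraic closure of M, the splitting field of the polynomial X^q − X − f over M equals the compositum of the splitting fields over M of the polynomials X^p − X − β_i·f for i = 1, …, k. -/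
/-!
If `α` is one root of `X ^ q - X - f`, the others are `α + c` with `c ∈ 𝔽_q`, so the left side is
`M(α)`. For `b ∈ 𝔽_q` put `γ_b = ∑_{j<k} (bα)^{p^j}`; then `γ_b ^ p - γ_b = (bα)^q - bα = b f`,
so `γ_b` is a root of `X ^ p - X - b f`, whose splitting field is likewise `M(γ_b) ⊆ M(α)`.
Conversely `b ↦ γ_b` is additive, so every `γ_b` lies in the compositum of the `M(γ_{β_i})` since
the `β_i` span `𝔽_q` over `𝔽_p`; and `α = -∑_b b⁻¹ γ_b`, because `∑_b b⁻¹ b^{p^j}` is `-1` for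
`j = 0` and `0` for `0 < j < k`.
-/

open Polynomial IntermediateField

theorem FiniteField.exists_eq_of_pow_card_eq {F L : Type*} [Field F] [Fintype F] [Field L]
    (φ : F →+* L) {x : L} (hx : x ^ Fintype.card F = x) : ∃ c, φ c = x := by
  have hroots : (X ^ Fintype.card F - X : F[X]).roots.map φ =
      ((X ^ Fintype.card F - X : F[X]).map φ).roots :=
    roots_map_of_injective_of_card_eq_natDegree φ.injective <| by
      rw [roots_X_pow_card_sub_X, X_pow_card_sub_X_natDegree_eq F Fintype.one_lt_card]; rfl
  have hx' : x ∈ ((X ^ Fintype.card F - X : F[X]).map φ).roots := by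
    rw [mem_roots (map_ne_zero (X_pow_card_sub_X_ne_zero F Fintype.one_lt_card))]
    simp [hx]
  rw [← hroots, roots_X_pow_card_sub_X] at hx'
  simpa using hx'

theorem FiniteField.sum_inv_mul_pow_pow {F : Type*} [Field F] [Fintype F] {p k j : ℕ}
    (hp : 1 < p) (hcard : Fintype.card F = p ^ k) (hj : j < k) :
    ∑ b : F, b⁻¹ * b ^ p ^ j = if j = 0 then -1 else 0 := by
  rcases Nat.eq_zero_or_pos j with rfl | hj0
  · classical
    simp only [pow_zero, pow_one, if_true]
    rw [← Finset.sum_erase _ (a := 0) (by simp), Finset.sum_congr rfl fun b hb =>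
      inv_mul_cancel₀ (Finset.ne_of_mem_erase hb)]
    simp [Finset.card_erase_of_mem, Nat.cast_sub Fintype.card_pos]
  · have hpj : 1 < p ^ j := Nat.one_lt_pow hj0.ne' hp
    have hterm : ∀ b : F, b⁻¹ * b ^ p ^ j = b ^ (p ^ j - 1) := fun b => by
      rcases eq_or_ne b 0 with rfl | hb
      · simp [zero_pow (by omega : p ^ j - 1 ≠ 0)]
      · rw [← Nat.sub_add_cancel hpj.le, pow_succ', inv_mul_cancel_left₀ hb]; simp
    simp only [hterm, hj0.ne', if_false]
    refine sum_pow_lt_card_sub_one F _ ?_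
    rw [hcard]
    have := Nat.pow_lt_pow_right hp hj
    omega

theorem AddSubgroup.toZModSubmodule_closure (n : ℕ) {G : Type*} [AddCommGroup G]
    [Module (ZMod n) G] (s : Set G) :
    toZModSubmodule n (closure s) = Submodule.span (ZMod n) s :=
  le_antisymm
    ((toZModSubmodule n).symm.le_iff_le.mp ((closure_le _).mpr Submodule.subset_span))
    (Submodule.span_le.mpr subset_closure)

theorem LinearIndependent.closure_range_eq_top_of_card_eq_pow {F ι : Type*} [AddCommGroup F]
    [Finite F] [Fintype ι] {p k : ℕ} [Fact p.Prime] [Module (ZMod p) F] {β : ι → F}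
    (hβ : LinearIndependent (ZMod p) β) (hcard : Nat.card F = p ^ k) (hι : Fintype.card ι = k) :
    AddSubgroup.closure (Set.range β) = ⊤ := by
  have hfinrank : Module.finrank (ZMod p) F = k := by
    have := Module.natCard_eq_pow_finrank (K := ZMod p) (V := F)
    rw [Nat.card_zmod, hcard] at this
    exact Nat.pow_right_injective (Fact.out : p.Prime).two_le this.symm
  have := hβ.span_eq_top_of_card_eq_finrank' (hι.trans hfinrank.symm)
  rwa [← AddSubgroup.toZModSubmodule_closure, map_eq_top_iff] at this

section XPowSubXSubC

variable {R : Type*} [CommRing R] [Nontrivial R] {n : ℕ}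

theorem natDegree_X_pow_sub_X_sub_C (hn : 1 < n) (a : R) : (X ^ n - X - C a).natDegree = n := by
  compute_degree!
  · rw [if_neg (by omega), if_neg (by omega)]
    simp
  · omega

theorem X_pow_sub_X_sub_C_ne_zero (hn : 1 < n) (a : R) : X ^ n - X - C a ≠ 0 := fun h => by
  have := natDegree_X_pow_sub_X_sub_C hn a
  rw [h, natDegree_zero] at this
  omega

end XPowSubXSubC

theorem IsAlgClosed.exists_pow_sub_self_eq {L : Type*} [Field L] [IsAlgClosed L] {n : ℕ}
    (hn : 1 < n) (a : L) : ∃ x : L, x ^ n - x = a := by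
  obtain ⟨x, hx⟩ := exists_root (X ^ n - X - C a) <| (natDegree_pos_iff_degree_pos.mp <| by
    rw [natDegree_X_pow_sub_X_sub_C hn]; omega).ne'
  exact ⟨x, by simpa [sub_eq_zero] using hx⟩

section frobeniusSum

variable (R : Type*) [CommRing R] (p : ℕ) [ExpChar R p]

noncomputable def frobeniusSum (k : ℕ) : R →+ R :=
  ∑ j ∈ Finset.range k, (iterateFrobenius R p j).toAddMonoidHom

variable {R p} {k : ℕ}

theorem frobeniusSum_apply (y : R) : frobeniusSum R p k y = ∑ j ∈ Finset.range k, y ^ p ^ j := by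
  simp [frobeniusSum, iterateFrobenius_def]

theorem frobeniusSum_pow_sub (y : R) :
    frobeniusSum R p k y ^ p - frobeniusSum R p k y = y ^ p ^ k - y := by
  rw [frobeniusSum_apply, sum_pow_char, ← Finset.sum_sub_distrib]
  simp_rw [← pow_mul, ← pow_succ]
  rw [Finset.sum_range_sub (fun j => y ^ p ^ j)]
  simp

theorem frobeniusSum_mem {S : Type*} [SetLike S R] [SubsemiringClass S R] {s : S} {y : R}
    (hy : y ∈ s) : frobeniusSum R p k y ∈ s := by
  rw [frobeniusSum_apply]
  exact sum_mem fun j _ => pow_mem hy _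

theorem frobeniusSum_mul_pow_sub {b α a : R} (hb : b ^ p ^ k = b) (hα : α ^ p ^ k - α = a) :
    frobeniusSum R p k (b * α) ^ p - frobeniusSum R p k (b * α) = b * a := by
  rw [frobeniusSum_pow_sub, mul_pow, hb, ← hα, mul_sub]

end frobeniusSum

theorem FiniteField.sum_inv_mul_frobeniusSum {F L : Type*} [Field F] [Fintype F] [CommRing L]
    {p k : ℕ} [ExpChar L p] (φ : F →+* L) (hcard : Fintype.card F = p ^ k)
    (α : L) : ∑ b : F, φ b⁻¹ * frobeniusSum L p k (φ b * α) = -α := by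
  have hq : 1 < p ^ k := hcard ▸ Fintype.one_lt_card
  have hk : k ≠ 0 := by rintro rfl; simp at hq
  have hp : 1 < p := (Nat.one_lt_pow_iff hk).mp hq
  simp_rw [frobeniusSum_apply, Finset.mul_sum, mul_pow, ← map_pow, ← mul_assoc, ← map_mul]
  rw [Finset.sum_comm]
  simp_rw [← Finset.sum_mul, ← map_sum]
  rw [Finset.sum_congr rfl fun j hj =>
    by rw [sum_inv_mul_pow_pow hp hcard (Finset.mem_range.mp hj)]]
  simp [apply_ite φ, ite_mul, Nat.pos_of_ne_zero hk]

section FiniteSubfield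

variable {F M L : Type*} [Field F] [Fintype F] [Field M] [Algebra F M] [Field L] [Algebra M L]
  {p k : ℕ}

theorem mem_of_forall_frobeniusSum_mul_mem [ExpChar L p] (φ : F →+* L)
    (hcard : Fintype.card F = p ^ k) {S : Subfield L} (hφ : ∀ b, φ b ∈ S) {ι : Type*} {β : ι → F}
    (hβ : AddSubgroup.closure (Set.range β) = ⊤) {α : L}
    (h : ∀ i, frobeniusSum L p k (φ (β i) * α) ∈ S) : α ∈ S := by
  have hall : ∀ b, frobeniusSum L p k (φ b * α) ∈ S := by
    let Φ : F →+ L :=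
      ((frobeniusSum L p k).comp (AddMonoidHom.mulRight α)).comp φ.toAddMonoidHom
    have : AddSubgroup.closure (Set.range β) ≤ S.toAddSubgroup.comap Φ :=
      (AddSubgroup.closure_le _).mpr (Set.range_subset_iff.mpr h)
    rw [hβ] at this
    exact fun b => this (AddSubgroup.mem_top b)
  rw [← neg_neg α, ← FiniteField.sum_inv_mul_frobeniusSum φ hcard α]
  exact neg_mem (sum_mem fun b _ => mul_mem (hφ _) (hall b))

theorem adjoin_rootSet_X_pow_card_sub_X_sub_C [ExpChar L p] (hcard : Fintype.card F = p ^ k)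
    (g : M) {α : L} (hα : α ^ Fintype.card F - α = algebraMap M L g) :
    adjoin M ((X ^ Fintype.card F - X - C g).rootSet L) = M⟮α⟯ := by
  refine le_antisymm (adjoin_le_iff.mpr fun x hx => ?_) (adjoin_simple_le_iff.mpr ?_)
  · have hx' : x ^ Fintype.card F - x = algebraMap M L g := by
      simpa [sub_eq_zero] using (mem_rootSet.mp hx).2
    obtain ⟨c, hc⟩ := FiniteField.exists_eq_of_pow_card_eq
      ((algebraMap M L).comp (algebraMap F M)) (x := x - α) <| by
        rw [hcard, sub_pow_expChar_pow, ← hcard]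
        linear_combination hx' - hα
    rw [← sub_add_cancel x α, ← hc]
    exact add_mem (IntermediateField.algebraMap_mem _ _) (mem_adjoin_simple_self M α)
  · exact subset_adjoin M _ <| mem_rootSet.mpr
      ⟨X_pow_sub_X_sub_C_ne_zero Fintype.one_lt_card g, by simpa [sub_eq_zero] using hα⟩

variable [Algebra F L] [IsScalarTower F M L]

theorem adjoin_simple_eq_iSup_adjoin_simple_frobeniusSum [ExpChar L p]
    (hcard : Fintype.card F = p ^ k) {ι : Type*} {β : ι → F}
    (hβ : AddSubgroup.closure (Set.range β) = ⊤) (α : L) :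
    M⟮α⟯ = ⨆ i, M⟮frobeniusSum L p k (algebraMap F L (β i) * α)⟯ := by
  have hF : ∀ (E : IntermediateField M L) b, algebraMap F L b ∈ E := fun E b => by
    rw [IsScalarTower.algebraMap_apply F M L]
    exact IntermediateField.algebraMap_mem _ _
  refine le_antisymm (adjoin_simple_le_iff.mpr ?_) (iSup_le fun i => adjoin_simple_le_iff.mpr ?_)
  · exact mem_of_forall_frobeniusSum_mul_mem (algebraMap F L) hcard (hF (⨆ i, _)) hβ
      fun i => le_iSup (fun i => M⟮_⟯) i (mem_adjoin_simple_self M _)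
  · exact frobeniusSum_mem (mul_mem (hF _ _) (mem_adjoin_simple_self M α))

theorem adjoin_rootSet_X_pow_sub_X_sub_C_eq_iSup [Fact p.Prime] [CharP M p]
    (hcard : Fintype.card F = p ^ k) {ι : Type*} {β : ι → F}
    (hβ : AddSubgroup.closure (Set.range β) = ⊤) (f : M) {α : L}
    (hα : α ^ p ^ k - α = algebraMap M L f) :
    adjoin M ((X ^ p ^ k - X - C f).rootSet L) =
      ⨆ i, adjoin M ((X ^ p - X - C (algebraMap F M (β i) * f)).rootSet L) := by
  have : CharP L p := charP_of_injective_algebraMap (algebraMap M L).injective p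
  let _ : Algebra (ZMod p) M := ZMod.algebra M p
  have hsmall (i : ι) : adjoin M ((X ^ p - X - C (algebraMap F M (β i) * f)).rootSet L) =
      M⟮frobeniusSum L p k (algebraMap F L (β i) * α)⟯ := by
    have hβi : algebraMap F L (β i) ^ p ^ k = algebraMap F L (β i) := by
      rw [← map_pow, ← hcard, FiniteField.pow_card]
    simpa only [ZMod.card] using adjoin_rootSet_X_pow_card_sub_X_sub_C (F := ZMod p) (k := 1)
      (ZMod.card p |>.trans (pow_one p).symm) _ <| by
        rw [ZMod.card, frobeniusSum_mul_pow_sub hβi hα, map_mul,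
          ← IsScalarTower.algebraMap_apply]
  rw [← hcard, adjoin_rootSet_X_pow_card_sub_X_sub_C hcard f (hcard ▸ hα), iSup_congr hsmall]
  exact adjoin_simple_eq_iSup_adjoin_simple_frobeniusSum hcard hβ α

end FiniteSubfield

theorem splittingField_artinSchreier_eq_iSup_general (p k : ℕ) [Fact p.Prime]
    (q : ℕ) (hq : q = p ^ k) (𝔽 : Type*) [Field 𝔽] [Fintype 𝔽]
    (hcard : Fintype.card 𝔽 = q) [CharP 𝔽 p]
    (M : Type*) [Field M] [Algebra 𝔽 M] (f : M) :
    letI := ZMod.algebra 𝔽 p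
    ∀ β : Fin k → 𝔽, LinearIndependent (ZMod p) β →
      IntermediateField.adjoin M ((X ^ q - X - C f).rootSet (AlgebraicClosure M)) =
        ⨆ i : Fin k, IntermediateField.adjoin M
          ((X ^ p - X - C (algebraMap 𝔽 M (β i) * f)).rootSet (AlgebraicClosure M)) := by
  let _ := ZMod.algebra 𝔽 p
  intro β hβ
  subst hq
  have : CharP M p := charP_of_injective_algebraMap (algebraMap 𝔽 M).injective p
  obtain ⟨α, hα⟩ := IsAlgClosed.exists_pow_sub_self_eq (Fintype.one_lt_card.trans_eq hcard)
    (algebraMap M (AlgebraicClosure M) f)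
  exact adjoin_rootSet_X_pow_sub_X_sub_C_eq_iSup hcard
    (hβ.closure_range_eq_top_of_card_eq_pow (Nat.card_eq_fintype_card.trans hcard) (by simp))
    f hα

/-- Let `q = p^k` (`k ≥ 1`), `𝔽` the field with `q` elements, `M` a field
containing `𝔽`, `f ∈ M`, and `β₁, …, β_k ∈ 𝔽` linearly independent over `𝔽_p`. Then inside a
fixed algebraic closure of `M`, the splitting field of `X^q - X - f` over `M` is the
compositum of the splitting fields of the polynomials `X^p - X - βᵢ·f`. -/
theorem splittingField_artinSchreier_eq_iSup (p k : ℕ) [Fact p.Prime] (hk : 0 < k)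
    (q : ℕ) (hq : q = p ^ k) (𝔽 : Type*) [Field 𝔽] [Fintype 𝔽]
    (hcard : Fintype.card 𝔽 = q) [CharP 𝔽 p]
    (M : Type*) [Field M] [Algebra 𝔽 M] (f : M) :
    letI := ZMod.algebra 𝔽 p
    ∀ β : Fin k → 𝔽, LinearIndependent (ZMod p) β →
      IntermediateField.adjoin M ((X ^ q - X - C f).rootSet (AlgebraicClosure M)) =
        ⨆ i : Fin k, IntermediateField.adjoin M
          ((X ^ p - X - C (algebraMap 𝔽 M (β i) * f)).rootSet (AlgebraicClosure M)) :=
  splittingField_artinSchreier_eq_iSup_general p k q hq 𝔽 hcard M f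
end
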